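/- Let λ > 0, ε > 0, t ≥ 0, and let g : [0,∞) → ℂ be smooth with g and all its derivatives up to order 2n+1 vanishing at s = 0. Then ∫₀ᵗ (sin((t−s)√λ/ε) / (√λ/ε)) g(s) ds = Σ_{m=0}^{n} (ε²/λ)^{m+1} ((−d²/dt²)^m g)(t) − (ε²/λ)^{n+1} ∫₀ᵗ cos((t−s)√λ/ε) (d/ds)((−d²/ds²)^n g)(s) ds. -/

import Mathlib

open MeasureTheory

section aux

lemma hasDerivAt_cosR (ω t : ℝ) (x : ℝ) :
    HasDerivAt (fun s : ℝ => Real.cos ((t - s) * ω)) (ω * Real.sin ((t - x) * ω)) x := by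
  have h1 : HasDerivAt (fun s : ℝ => (t - s) * ω) (-ω) x := by
    simpa using ((hasDerivAt_id x).const_sub t).mul_const ω
  have h2 := (Real.hasDerivAt_cos ((t - x) * ω)).comp x h1
  refine h2.congr_deriv ?_; ring

lemma hasDerivAt_sinR (ω t : ℝ) (x : ℝ) :
    HasDerivAt (fun s : ℝ => Real.sin ((t - s) * ω)) (-(ω * Real.cos ((t - x) * ω))) x := by
  have h1 : HasDerivAt (fun s : ℝ => (t - s) * ω) (-ω) x := by
    simpa using ((hasDerivAt_id x).const_sub t).mul_const ω
  have h2 := (Real.hasDerivAt_sin ((t - x) * ω)).comp x h1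
  refine h2.congr_deriv ?_; ring

lemma lemA (ω : ℝ) (hω : 0 < ω) (t : ℝ) (f f' : ℝ → ℂ)
    (hf : ∀ x, HasDerivAt f (f' x) x) (hfc : Continuous f) (hf'c : Continuous f')
    (h0 : f 0 = 0) :
    (∫ s in (0:ℝ)..t, ((Real.sin ((t - s) * ω) / ω : ℝ) : ℂ) * f s)
      = ((1 / ω ^ 2 : ℝ) : ℂ) * f t
        - ((1 / ω ^ 2 : ℝ) : ℂ) * ∫ s in (0:ℝ)..t,
            ((Real.cos ((t - s) * ω) : ℝ) : ℂ) * f' s := by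
  have hωne : ω ≠ 0 := hω.ne'
  have hu : ∀ x ∈ Set.uIcc (0:ℝ) t, HasDerivAt f (f' x) x := fun x _ => hf x
  have hv : ∀ x ∈ Set.uIcc (0:ℝ) t,
      HasDerivAt (fun s : ℝ => ((Real.cos ((t - s) * ω) / ω ^ 2 : ℝ) : ℂ))
        (((Real.sin ((t - x) * ω) / ω : ℝ) : ℂ)) x := by
    intro x _
    have hr : HasDerivAt (fun s : ℝ => Real.cos ((t - s) * ω) / ω ^ 2)
        (Real.sin ((t - x) * ω) / ω) x := by
      have := (hasDerivAt_cosR ω t x).div_const (ω ^ 2)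
      refine this.congr_deriv ?_
      field_simp
    exact hr.ofReal_comp
  have hcont1 : Continuous fun s : ℝ => ((Real.sin ((t - s) * ω) / ω : ℝ) : ℂ) :=
    Complex.continuous_ofReal.comp (by fun_prop)
  have key := intervalIntegral.integral_mul_deriv_eq_deriv_mul hu hv
    (hf'c.intervalIntegrable 0 t) (hcont1.intervalIntegrable 0 t)
  have h1 : (∫ s in (0:ℝ)..t, ((Real.sin ((t - s) * ω) / ω : ℝ) : ℂ) * f s)
      = ∫ s in (0:ℝ)..t, f s * ((Real.sin ((t - s) * ω) / ω : ℝ) : ℂ) := by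
    congr 1; ext s; ring
  rw [h1, key, h0]
  have h2 : (∫ s in (0:ℝ)..t, f' s * ((Real.cos ((t - s) * ω) / ω ^ 2 : ℝ) : ℂ))
      = ((1 / ω ^ 2 : ℝ) : ℂ) * ∫ s in (0:ℝ)..t,
          ((Real.cos ((t - s) * ω) : ℝ) : ℂ) * f' s := by
    rw [← intervalIntegral.integral_const_mul]
    congr 1; ext s; push_cast; ring
  rw [h2]
  simp only [sub_self, zero_mul, Real.cos_zero, mul_zero]
  push_cast
  ring

lemma lemB (ω : ℝ) (hω : 0 < ω) (t : ℝ) (f f' : ℝ → ℂ)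
    (hf : ∀ x, HasDerivAt f (f' x) x) (hfc : Continuous f) (hf'c : Continuous f')
    (h0 : f 0 = 0) :
    (∫ s in (0:ℝ)..t, ((Real.cos ((t - s) * ω) : ℝ) : ℂ) * f s)
      = ∫ s in (0:ℝ)..t, ((Real.sin ((t - s) * ω) / ω : ℝ) : ℂ) * f' s := by
  have hωne : ω ≠ 0 := hω.ne'
  have hu : ∀ x ∈ Set.uIcc (0:ℝ) t, HasDerivAt f (f' x) x := fun x _ => hf x
  have hv : ∀ x ∈ Set.uIcc (0:ℝ) t,
      HasDerivAt (fun s : ℝ => ((-(Real.sin ((t - s) * ω) / ω) : ℝ) : ℂ))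
        (((Real.cos ((t - x) * ω) : ℝ) : ℂ)) x := by
    intro x _
    have hr : HasDerivAt (fun s : ℝ => -(Real.sin ((t - s) * ω) / ω))
        (Real.cos ((t - x) * ω)) x := by
      have := ((hasDerivAt_sinR ω t x).div_const ω).neg
      refine HasDerivAt.congr_deriv (f := fun s : ℝ => -(Real.sin ((t - s) * ω) / ω)) this ?_
      field_simp
    exact hr.ofReal_comp
  have hcont1 : Continuous fun s : ℝ => ((Real.cos ((t - s) * ω) : ℝ) : ℂ) :=
    Complex.continuous_ofReal.comp (by fun_prop)
  have key := intervalIntegral.integral_mul_deriv_eq_deriv_mul hu hv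
    (hf'c.intervalIntegrable 0 t) (hcont1.intervalIntegrable 0 t)
  have h1 : (∫ s in (0:ℝ)..t, ((Real.cos ((t - s) * ω) : ℝ) : ℂ) * f s)
      = ∫ s in (0:ℝ)..t, f s * ((Real.cos ((t - s) * ω) : ℝ) : ℂ) := by
    congr 1; ext s; ring
  rw [h1, key, h0]
  have h2 : (∫ s in (0:ℝ)..t, f' s * ((-(Real.sin ((t - s) * ω) / ω) : ℝ) : ℂ))
      = - ∫ s in (0:ℝ)..t, ((Real.sin ((t - s) * ω) / ω : ℝ) : ℂ) * f' s := by
    rw [← intervalIntegral.integral_neg]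
    congr 1; ext s; push_cast; ring
  rw [h2]
  simp

end aux

/-- Iterated integration by parts: for `λ > 0`, `ε > 0`, `t ≥ 0`, and `g` smooth with `g` and all
its derivatives up to order `2n+1` vanishing at `0`,
`∫₀ᵗ (sin((t−s)√λ/ε)/(√λ/ε)) g(s) ds
  = Σ_{m=0}^{n} (ε²/λ)^{m+1} ((−d²/dt²)^m g)(t)
    − (ε²/λ)^{n+1} ∫₀ᵗ cos((t−s)√λ/ε) (d/ds)((−d²/ds²)^n g)(s) ds`. -/
theorem stmt1 (lam ε : ℝ) (hlam : 0 < lam) (hε : 0 < ε) (t : ℝ) (ht : 0 ≤ t)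
    (n : ℕ) (g : ℝ → ℂ) (hg : ContDiff ℝ (⊤ : ℕ∞) g)
    (h0 : ∀ k ≤ 2 * n + 1, iteratedDeriv k g 0 = 0) :
    (∫ s in (0:ℝ)..t,
        ((Real.sin ((t - s) * Real.sqrt lam / ε) / (Real.sqrt lam / ε) : ℝ) : ℂ) * g s)
      = (∑ m ∈ Finset.range (n + 1),
          (((ε ^ 2 / lam) ^ (m + 1) : ℝ) : ℂ) * ((-1 : ℂ) ^ m * iteratedDeriv (2 * m) g t))
        - (((ε ^ 2 / lam) ^ (n + 1) : ℝ) : ℂ) *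
          ∫ s in (0:ℝ)..t,
            ((Real.cos ((t - s) * Real.sqrt lam / ε) : ℝ) : ℂ) *
              ((-1 : ℂ) ^ n * iteratedDeriv (2 * n + 1) g s) := by
  set ω : ℝ := Real.sqrt lam / ε with hωdef
  have hω : 0 < ω := div_pos (Real.sqrt_pos.2 hlam) hε
  have hc : (ε ^ 2 / lam) = 1 / ω ^ 2 := by
    rw [hωdef, div_pow, Real.sq_sqrt hlam.le]
    field_simp
  have harg : ∀ s : ℝ, (t - s) * Real.sqrt lam / ε = (t - s) * ω := by
    intro s; rw [hωdef]; ring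
  have hder : ∀ k : ℕ, ∀ x : ℝ, HasDerivAt (iteratedDeriv k g)
      (iteratedDeriv (k + 1) g x) x := by
    intro k x
    have hdiff : DifferentiableAt ℝ (iteratedDeriv k g) x := by
      refine (hg.differentiable_iteratedDeriv k ?_) x
      exact_mod_cast ENat.coe_lt_top k
    have := hdiff.hasDerivAt
    rwa [← iteratedDeriv_succ] at this
  have hcont : ∀ k : ℕ, Continuous (iteratedDeriv k g) := fun k =>
    hg.continuous_iteratedDeriv k (by exact_mod_cast le_top)
  simp only [harg]
  induction n with
  | zero =>
      have := lemA ω hω t g (iteratedDeriv 1 g)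
        (by simpa [iteratedDeriv_one] using fun x => hder 0 x)
        (by simpa using hcont 0) (hcont 1)
        (by simpa using h0 0 (by norm_num))
      simpa [hc, iteratedDeriv_one] using this
  | succ n ih =>
      have h0' : ∀ k ≤ 2 * n + 1, iteratedDeriv k g 0 = 0 := fun k hk =>
        h0 k (by omega)
      have ihh := ih h0'
      rw [ihh]
      have hB := lemB ω hω t (iteratedDeriv (2 * n + 1) g) (iteratedDeriv (2 * n + 2) g)
        (hder (2 * n + 1)) (hcont (2 * n + 1)) (hcont (2 * n + 2))
        (h0 (2 * n + 1) (by omega))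
      have hA := lemA ω hω t (iteratedDeriv (2 * n + 2) g) (iteratedDeriv (2 * n + 3) g)
        (hder (2 * n + 2)) (hcont (2 * n + 2)) (hcont (2 * n + 3))
        (h0 (2 * n + 2) (by omega))
      have hrem : (∫ s in (0:ℝ)..t, ((Real.cos ((t - s) * ω) : ℝ) : ℂ) *
            ((-1 : ℂ) ^ n * iteratedDeriv (2 * n + 1) g s))
          = (-1 : ℂ) ^ n * (((1 / ω ^ 2 : ℝ) : ℂ) * iteratedDeriv (2 * n + 2) g t
              - ((1 / ω ^ 2 : ℝ) : ℂ) * ∫ s in (0:ℝ)..t,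
                  ((Real.cos ((t - s) * ω) : ℝ) : ℂ) * iteratedDeriv (2 * n + 3) g s) := by
        rw [← hA, ← hB, ← intervalIntegral.integral_const_mul]
        congr 1; ext s; ring
      rw [hrem]
      conv_rhs => rw [Finset.sum_range_succ]
      rw [show 2 * (n + 1) = 2 * n + 2 from by ring,
        show 2 * n + 2 + 1 = 2 * n + 3 from by ring, hc]
      set c : ℝ := 1 / ω ^ 2 with hcdef
      set I := ∫ s in (0:ℝ)..t, ((Real.cos ((t - s) * ω) : ℝ) : ℂ) *
        ((-1 : ℂ) ^ (n + 1) * iteratedDeriv (2 * n + 3) g s) with hIdef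
      have hI : (∫ s in (0:ℝ)..t, ((Real.cos ((t - s) * ω) : ℝ) : ℂ) *
          iteratedDeriv (2 * n + 3) g s) = (-1 : ℂ) ^ (n + 1) * I := by
        rw [hIdef, ← intervalIntegral.integral_const_mul]
        congr 1; ext s
        have hsq : ((-1 : ℂ) ^ (n+1)) * ((-1 : ℂ) ^ (n+1)) = 1 := by
          rw [← pow_add, ← two_mul, pow_mul]; norm_num
        calc ((Real.cos ((t - s) * ω) : ℝ) : ℂ) * iteratedDeriv (2 * n + 3) g s
            = ((-1:ℂ)^(n+1) * (-1:ℂ)^(n+1)) * (((Real.cos ((t - s) * ω) : ℝ) : ℂ) *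
              iteratedDeriv (2 * n + 3) g s) := by rw [hsq]; ring
          _ = (-1:ℂ)^(n+1) * (((Real.cos ((t - s) * ω) : ℝ) : ℂ) *
              ((-1 : ℂ) ^ (n + 1) * iteratedDeriv (2 * n + 3) g s)) := by ring
      rw [hI]
      push_cast
      simp only [pow_succ]
      have hu : ((-1:ℂ)^n) * ((-1:ℂ)^n) = 1 := by
        rw [← pow_add, ← two_mul, pow_mul]; norm_num
      linear_combination (-(((c : ℝ) : ℂ))^n * ((c : ℝ) : ℂ) * ((c : ℝ) : ℂ) * I) * hu
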